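/- For every integer n ≥ 1, the n-th Bernoulli number satisfies B_n = Σ_{i=1}^{n} (-1)^i · (C(n+1, i+1)/C(n+i, i)) · S(n+i, i), where S denotes Stirling numbers of the second kind. -/

import Mathlib

/-- Stirling numbers of the second kind, via the standard recurrence. -/
def stirling : ℕ → ℕ → ℕ
  | 0, 0 => 1
  | 0, _ + 1 => 0
  | _ + 1, 0 => 0
  | n + 1, k + 1 => (k + 1) * stirling n (k + 1) + stirling n k

/-!
Let `G = (eˣ - 1)/x`, so that the Bernoulli generating function is `1/G`. Since `G(0) = 1`,
the identity `G · ∑_{i=0}^{n} (-1)^i C(n+1, i+1) G^i = 1 - (1 - G)^(n+1)` shows that this sum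
agrees with `1/G` up to order `n`, so `B_n / n!` is its `n`-th coefficient. On the other hand
`xⁱ Gⁱ = (eˣ - 1)ⁱ = i! ∑_m S(m, i) xᵐ / m!`: differentiating, both sides satisfy
`u_{i+1}' = (i+1) (u_{i+1} + u_i)` (for the right side this is the Stirling recurrence) and
vanish at `0`. Hence `[xⁿ] Gⁱ = S(n+i, i) / (C(n+i, i) n!)`.
-/

open Finset PowerSeries
open scoped Nat

theorem stirling_eq_stirlingSecond : stirling = Nat.stirlingSecond := by
  funext n k
  induction n generalizing k with
  | zero => cases k <;> rfl
  | succ n ih => cases k <;> simp [stirling, Nat.stirlingSecond_succ_succ, ih]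

theorem mul_sum_neg_one_pow_mul_choose_succ_mul_pow {R : Type*} [CommRing R] (x : R) (n : ℕ) :
    x * ∑ i ∈ range (n + 1), (-1) ^ i * ((n + 1).choose (i + 1) : R) * x ^ i =
      1 - (1 - x) ^ (n + 1) := by
  rw [← neg_add_eq_sub x, add_pow, sum_range_succ' _ (n + 1), mul_sum]
  simp only [one_pow, mul_one, pow_zero, Nat.choose_zero_right, Nat.cast_one, neg_pow x,
    sub_add_cancel_right, ← sum_neg_distrib]
  refine sum_congr rfl fun i _ => by ring

namespace PowerSeries

theorem eq_zero_of_derivative_eq_smul {A : Type*} [CommRing A] [IsAddTorsionFree A]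
    {u : A⟦X⟧} (c : A) (hd : d⁄dX A u = c • u) (h0 : constantCoeff u = 0) : u = 0 := by
  ext m
  induction m with
  | zero => simpa using h0
  | succ m ih =>
    have h := congrArg (coeff m) hd
    rw [map_zero] at ih ⊢
    rw [coeff_derivative, coeff_smul, ih, smul_zero, mul_comm, ← Nat.cast_succ,
      ← nsmul_eq_mul] at h
    exact (smul_eq_zero.mp h).resolve_left m.succ_ne_zero

theorem coeff_eq_sum_choose_mul_coeff_pow_of_mul_eq_one {R : Type*} [CommRing R]
    {f g : R⟦X⟧} (hfg : f * g = 1) (hg : constantCoeff g = 1) (n : ℕ) :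
    coeff n f = ∑ i ∈ range (n + 1), (-1) ^ i * (n + 1).choose (i + 1) * coeff n (g ^ i) := by
  set F := ∑ i ∈ range (n + 1), (-1) ^ i * ((n + 1).choose (i + 1) : R⟦X⟧) * g ^ i
  have hF : F = f - f * (1 - g) ^ (n + 1) := by
    calc F = f * (g * F) := by rw [← mul_assoc, hfg, one_mul]
      _ = f - f * (1 - g) ^ (n + 1) := by
        rw [mul_sum_neg_one_pow_mul_choose_succ_mul_pow, mul_sub, mul_one]
  have hdvd : X ^ (n + 1) ∣ f * (1 - g) ^ (n + 1) :=
    (pow_dvd_pow_of_dvd (X_dvd_iff.mpr (by simp [hg])) _).mul_left f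
  have hcoeff : coeff n F = coeff n f := by
    rw [hF, map_sub, X_pow_dvd_iff.mp hdvd n n.lt_succ_self, sub_zero]
  rw [← hcoeff, map_sum]
  refine sum_congr rfl fun i _ => ?_
  rw [← coeff_C_mul]
  simp

noncomputable def stirlingSecondEGF (k : ℕ) : ℚ⟦X⟧ :=
  mk fun m => (m.stirlingSecond k : ℚ) / m !

theorem derivative_stirlingSecondEGF_succ (k : ℕ) :
    d⁄dX ℚ (stirlingSecondEGF (k + 1)) =
      ((k : ℚ) + 1) • stirlingSecondEGF (k + 1) + stirlingSecondEGF k := by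
  ext m
  simp only [stirlingSecondEGF, coeff_derivative, map_add, coeff_smul, coeff_mk,
    Nat.stirlingSecond_succ_succ, Nat.factorial_succ, smul_eq_mul]
  push_cast
  field_simp

theorem exp_sub_one_pow (k : ℕ) : (exp ℚ - 1) ^ k = (k ! : ℚ) • stirlingSecondEGF k := by
  induction k with
  | zero =>
    ext m
    cases m <;> simp [stirlingSecondEGF, coeff_one]
  | succ k ih =>
    rw [← sub_eq_zero]
    refine eq_zero_of_derivative_eq_smul ((k : ℚ) + 1) ?_ ?_
    · rw [map_sub, Derivation.leibniz_pow, map_sub, derivative_exp, Derivation.map_one_eq_zero,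
        sub_zero, Derivation.map_smul, derivative_stirlingSecondEGF_succ, Nat.add_sub_cancel,
        Nat.factorial_succ, Nat.cast_mul, mul_smul, smul_add, ← ih]
      simp only [smul_eq_C_mul, nsmul_eq_mul, map_add, map_mul, map_natCast, map_one]
      push_cast
      ring
    · simp [stirlingSecondEGF]

noncomputable def expSubOneDivX : ℚ⟦X⟧ :=
  mk fun m => ((m + 1)! : ℚ)⁻¹

theorem X_mul_expSubOneDivX : X * expSubOneDivX = exp ℚ - 1 := by
  ext m
  cases m <;> simp [expSubOneDivX, coeff_one]

theorem constantCoeff_expSubOneDivX : constantCoeff expSubOneDivX = 1 := by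
  simp [expSubOneDivX]

theorem bernoulliPowerSeries_mul_expSubOneDivX :
    bernoulliPowerSeries ℚ * expSubOneDivX = 1 := by
  refine X_mul_cancel ?_
  rw [mul_left_comm, X_mul_expSubOneDivX, bernoulliPowerSeries_mul_exp_sub_one, mul_one]

theorem coeff_expSubOneDivX_pow (n i : ℕ) :
    coeff n (expSubOneDivX ^ i) = (n + i).stirlingSecond i / ((n + i).choose i * n !) := by
  have h := congrArg (coeff (n + i)) (exp_sub_one_pow i)
  rw [← X_mul_expSubOneDivX, mul_pow, coeff_X_pow_mul, coeff_smul, stirlingSecondEGF,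
    coeff_mk] at h
  rw [h, ← Nat.choose_symm_add, Nat.cast_add_choose, smul_eq_mul]
  field_simp

end PowerSeries

theorem bernoulli_closed_form_QiChapman (n : ℕ) (hn : 1 ≤ n) :
    bernoulli n = ∑ i ∈ Finset.Icc 1 n,
      (-1 : ℚ) ^ i * (((n + 1).choose (i + 1) : ℚ) / ((n + i).choose i : ℚ)) *
        (stirling (n + i) i : ℚ) := by
  have hB : bernoulli n = n ! * coeff n (bernoulliPowerSeries ℚ) := by
    rw [bernoulliPowerSeries, coeff_mk, Algebra.algebraMap_self_apply,
      mul_div_cancel₀ _ (by positivity)]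
  have hterm (i : ℕ) :
      (n ! : ℚ) * ((-1) ^ i * (n + 1).choose (i + 1) * coeff n (expSubOneDivX ^ i)) =
        (-1) ^ i * ((n + 1).choose (i + 1) / (n + i).choose i) * stirling (n + i) i := by
    rw [coeff_expSubOneDivX_pow, stirling_eq_stirlingSecond]
    field_simp
  have hterm_zero : coeff n (expSubOneDivX ^ 0) = 0 := by
    rw [pow_zero, coeff_one, if_neg (by omega)]
  rw [hB, coeff_eq_sum_choose_mul_coeff_pow_of_mul_eq_one bernoulliPowerSeries_mul_expSubOneDivX
      constantCoeff_expSubOneDivX, range_eq_Ico, sum_eq_sum_Ico_succ_bot (by omega), zero_add,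
    Ico_add_one_right_eq_Icc, hterm_zero, mul_zero, zero_add, mul_sum]
  exact sum_congr rfl fun i _ => hterm i
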